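/- arXiv:2105.09513 — 4 statements merged into one kernel-verified Lean document; each statement's English description precedes it below -/
import Mathlib

section
/- Deterministic core of the early-training comparison theorem: let φ_1, …, φ_K ∈ C¹(ℝ) with K ≥ m. Let Θ_FF(0) = {c, V} be any FFN parameters and let Θ_K(0) consist of the same {c, V} together with α(0) = (1, 0, …, 0) and ω(0) = (1, …, 1), so that u^K(·; Θ_K(0)) = u^FF(·; Θ_FF(0)). Let Θ_FF(t) and Θ_K(t) be solutions of the respective gradient flows of the square loss on an interval [0, T₀). If the K×m matrix A(0) with entries A_{kj} = Σ_{i=1}^N c_i φ_k(v_iᵀ x̃_j) has full rank m and the initial residual vector Res(X)(0) = (u(x_j; Θ(0)) − y_j)_{j=1}^m is nonzero, then there exists T ∈ (0, T₀] such that L^K(t) < L^FF(t) for all t ∈ (0, T). -/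
open scoped BigOperators

noncomputable section

/-- Parameters `(c, V)` of a two-layer feed-forward network, as a Euclidean space. -/
abbrev FFParams (N d : ℕ) : Type :=
  EuclideanSpace ℝ (Fin N ⊕ Fin N × Fin (d + 1))

/-- Parameters `(c, V, α, ω)` of a two-layer Kronecker network, as a Euclidean space. -/
abbrev KParams (N d K : ℕ) : Type :=
  EuclideanSpace ℝ ((Fin N ⊕ Fin N × Fin (d + 1)) ⊕ (Fin K ⊕ Fin K))

/-- The two-layer feed-forward network `u^FF(x; θ) = Σ_i c_i φ₁(v_iᵀ x̃)`. -/
def uFF {N d : ℕ} (φ1 : ℝ → ℝ) (θ : FFParams N d) (x : Fin (d + 1) → ℝ) : ℝ :=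
  ∑ i, θ (Sum.inl i) * φ1 (∑ j, θ (Sum.inr (i, j)) * x j)

/-- The two-layer Kronecker network `u^K(x; Θ) = Σ_i c_i Σ_k α_k φ_k(ω_k v_iᵀ x̃)`. -/
def uK {N d K : ℕ} (φ : Fin K → ℝ → ℝ) (θ : KParams N d K) (x : Fin (d + 1) → ℝ) : ℝ :=
  ∑ i, θ (Sum.inl (Sum.inl i)) *
    ∑ k, θ (Sum.inr (Sum.inl k)) *
      φ k (θ (Sum.inr (Sum.inr k)) * ∑ j, θ (Sum.inl (Sum.inr (i, j))) * x j)

/-- The square loss of the feed-forward network. -/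
def sqLossFF {N d m : ℕ} (φ1 : ℝ → ℝ) (xt : Fin m → Fin (d + 1) → ℝ) (y : Fin m → ℝ)
    (θ : FFParams N d) : ℝ :=
  (1 / 2 : ℝ) * ∑ j, (uFF φ1 θ (xt j) - y j) ^ 2

/-- The square loss of the Kronecker network. -/
def sqLossK {N d K m : ℕ} (φ : Fin K → ℝ → ℝ) (xt : Fin m → Fin (d + 1) → ℝ)
    (y : Fin m → ℝ) (θ : KParams N d K) : ℝ :=
  (1 / 2 : ℝ) * ∑ j, (uK φ θ (xt j) - y j) ^ 2

/-! At the common initialisation the Kronecker loss, as a function of the `(c, V)` coordinates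
alone, is the feed-forward loss, so `∇L^K(0)` contains `∇L^FF(0)` as a sub-vector; its
`α`-components form the vector `A(0) Res(0)`, which is nonzero because `A(0)` has full column
rank. Along a gradient flow `dL/dt = -‖∇L‖²`, so `L^FF - L^K` vanishes at `t = 0` with
positive derivative `‖∇L^K(0)‖² - ‖∇L^FF(0)‖²`. -/

open Filter Topology

section Calculus

theorem eventually_lt_of_hasDerivAt_lt {f g : ℝ → ℝ} {a b : ℝ} (h0 : f 0 = g 0)
    (hf : HasDerivAt f a 0) (hg : HasDerivAt g b 0) (hab : a < b) :
    ∀ᶠ t in 𝓝[>] 0, f t < g t := by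
  have hslope : ∀ᶠ t in 𝓝[≠] 0, 0 < slope (g - f) 0 t :=
    (hasDerivAt_iff_tendsto_slope.mp (hg.sub hf)).eventually (lt_mem_nhds (sub_pos.mpr hab))
  filter_upwards [nhdsWithin_mono 0 (fun t (ht : 0 < t) => ht.ne') hslope,
    self_mem_nhdsWithin] with t hpos (ht : 0 < t)
  rw [slope_def_field, Pi.sub_apply, Pi.sub_apply, h0, sub_self, sub_zero, sub_zero,
    div_pos_iff_of_pos_right ht] at hpos
  linarith

theorem exists_forall_Ioo_of_eventually_nhdsGT {p : ℝ → Prop} {T₀ : ℝ} (hT₀ : 0 < T₀)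
    (h : ∀ᶠ t in 𝓝[>] 0, p t) : ∃ T, 0 < T ∧ T ≤ T₀ ∧ ∀ t ∈ Set.Ioo 0 T, p t := by
  obtain ⟨u, hu, hIoo⟩ := mem_nhdsGT_iff_exists_Ioo_subset.mp h
  exact ⟨min u T₀, lt_min hu hT₀, min_le_right _ _,
    fun t ht => hIoo ⟨ht.1, ht.2.trans_le (min_le_left _ _)⟩⟩

theorem hasDerivAt_comp_of_gradientFlow {E : Type*} [NormedAddCommGroup E]
    [InnerProductSpace ℝ E] [CompleteSpace E] {L : E → ℝ} {Θ : ℝ → E} {t : ℝ}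
    (hL : DifferentiableAt ℝ L (Θ t)) (hΘ : HasDerivAt Θ (-gradient L (Θ t)) t) :
    HasDerivAt (fun s => L (Θ s)) (-‖gradient L (Θ t)‖ ^ 2) t := by
  have := hL.hasGradientAt.hasFDerivAt.comp_hasDerivAt t hΘ
  rwa [InnerProductSpace.toDual_apply_apply, inner_neg_right, real_inner_self_eq_norm_sq] at this

theorem hasDerivAt_add_smul_single_gradient {ι : Type*} [Fintype ι] [DecidableEq ι]
    {f : EuclideanSpace ℝ ι → ℝ} {x : EuclideanSpace ℝ ι} (hf : DifferentiableAt ℝ f x)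
    (p : ι) :
    HasDerivAt (fun s : ℝ => f (x + s • EuclideanSpace.single p 1)) (gradient f x p) 0 := by
  have hline : HasDerivAt (fun s : ℝ => x + s • EuclideanSpace.single p (1 : ℝ))
      (EuclideanSpace.single p 1) 0 := by
    simpa using ((hasDerivAt_id (0 : ℝ)).smul_const (EuclideanSpace.single p (1 : ℝ))).const_add x
  have := hf.hasGradientAt.hasFDerivAt.comp_hasDerivAt_of_eq 0 hline (by simp)
  rwa [InnerProductSpace.toDual_apply_apply, EuclideanSpace.inner_single_right, one_mul,
    conj_trivial] at this

theorem hasDerivAt_half_sum_sq_add_mul {ι : Type*} [Fintype ι] (r a : ι → ℝ) :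
    HasDerivAt (fun s : ℝ => (1 / 2 : ℝ) * ∑ j, (r j + s * a j) ^ 2) (∑ j, r j * a j) 0 := by
  have hterm : ∀ j, HasDerivAt (fun s : ℝ => (r j + s * a j) ^ 2) (2 * r j * a j) 0 := fun j => by
    simpa using (((hasDerivAt_id (0 : ℝ)).mul_const (a j)).const_add (r j)).fun_pow 2
  refine ((HasDerivAt.fun_sum fun j _ => hterm j).const_mul (1 / 2 : ℝ)).congr_deriv ?_
  rw [Finset.mul_sum]
  exact Finset.sum_congr rfl fun j _ => by ring

end Calculus

theorem Matrix.mulVec_ne_zero_of_rank_eq_card {ι κ R : Type*} [Fintype κ] [Field R]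
    {A : Matrix ι κ R} (hA : A.rank = Fintype.card κ) {v : κ → R} (hv : v ≠ 0) :
    A.mulVec v ≠ 0 := by
  have hinj : Function.Injective A.mulVec := by
    rw [Matrix.mulVec_injective_iff, linearIndependent_iff_card_eq_finrank_span, ← hA,
      Matrix.rank_eq_finrank_span_cols]
    rfl
  exact fun h => hv (hinj (h.trans A.mulVec_zero.symm))

section Kronecker

variable {N d K m : ℕ}

theorem differentiable_sqLossFF {φ1 : ℝ → ℝ} (hφ1 : Differentiable ℝ φ1)
    (xt : Fin m → Fin (d + 1) → ℝ) (y : Fin m → ℝ) :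
    Differentiable ℝ (sqLossFF (N := N) φ1 xt y) := by
  unfold sqLossFF uFF
  fun_prop

theorem differentiable_sqLossK {φ : Fin K → ℝ → ℝ} (hφ : ∀ k, Differentiable ℝ (φ k))
    (xt : Fin m → Fin (d + 1) → ℝ) (y : Fin m → ℝ) :
    Differentiable ℝ (sqLossK (N := N) φ xt y) := by
  unfold sqLossK uK
  fun_prop

def kronParams (θ : FFParams N d) (α : Fin K → ℝ) : KParams N d K :=
  WithLp.toLp 2 (Sum.elim θ.ofLp (Sum.elim α 1))

def initAlpha (K : ℕ) : Fin K → ℝ := fun k => if (k : ℕ) = 0 then 1 else 0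

theorem sum_initAlpha_mul (hK : 0 < K) (f : Fin K → ℝ) :
    ∑ k, initAlpha K k * f k = f ⟨0, hK⟩ := by
  rw [Finset.sum_eq_single_of_mem ⟨0, hK⟩ (Finset.mem_univ _)]
  · simp [initAlpha]
  · intro k _ hk
    rw [initAlpha, if_neg (fun h => hk (Fin.ext h)), zero_mul]

theorem uK_kronParams (φ : Fin K → ℝ → ℝ) (θ : FFParams N d) (α : Fin K → ℝ)
    (x : Fin (d + 1) → ℝ) : uK φ (kronParams θ α) x = ∑ k, α k * uFF (φ k) θ x := by
  simp only [uK, uFF, kronParams, Sum.elim_inl, Sum.elim_inr, Pi.one_apply, one_mul,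
    Finset.mul_sum]
  rw [Finset.sum_comm]
  exact Finset.sum_congr rfl fun k _ => Finset.sum_congr rfl fun i _ => by ring

theorem sqLossK_kronParams_initAlpha (hK : 0 < K) (φ : Fin K → ℝ → ℝ)
    (xt : Fin m → Fin (d + 1) → ℝ) (y : Fin m → ℝ) (θ : FFParams N d) :
    sqLossK φ xt y (kronParams θ (initAlpha K)) = sqLossFF (φ ⟨0, hK⟩) xt y θ := by
  simp only [sqLossK, sqLossFF, uK_kronParams, sum_initAlpha_mul hK]

theorem kronParams_add_smul_single_inl (θ : FFParams N d) (α : Fin K → ℝ)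
    (p : Fin N ⊕ Fin N × Fin (d + 1)) (s : ℝ) :
    kronParams θ α + s • EuclideanSpace.single (Sum.inl p) 1 =
      kronParams (θ + s • EuclideanSpace.single p 1) α := by
  ext (q | q) <;> simp [kronParams, Pi.single_apply]

theorem kronParams_add_smul_single_alpha (θ : FFParams N d) (α : Fin K → ℝ) (k : Fin K)
    (s : ℝ) :
    kronParams θ α + s • EuclideanSpace.single (Sum.inr (Sum.inl k)) 1 =
      kronParams θ (α + s • Pi.single k 1) := by
  ext (q | q | q) <;> simp [kronParams, Pi.single_apply]

theorem gradient_sqLossK_kronParams_initAlpha_inl (hK : 0 < K) {φ : Fin K → ℝ → ℝ}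
    (hφ : ∀ k, Differentiable ℝ (φ k)) (xt : Fin m → Fin (d + 1) → ℝ) (y : Fin m → ℝ)
    (θ : FFParams N d) (p : Fin N ⊕ Fin N × Fin (d + 1)) :
    gradient (sqLossK φ xt y) (kronParams θ (initAlpha K)) (Sum.inl p) =
      gradient (sqLossFF (φ ⟨0, hK⟩) xt y) θ p := by
  have hderiv := hasDerivAt_add_smul_single_gradient
    (differentiable_sqLossK hφ xt y (kronParams θ (initAlpha K))) (Sum.inl p)
  simp only [kronParams_add_smul_single_inl, sqLossK_kronParams_initAlpha hK] at hderiv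
  exact hderiv.unique (hasDerivAt_add_smul_single_gradient
    (differentiable_sqLossFF (hφ _) xt y θ) p)

theorem gradient_sqLossK_kronParams_alpha {φ : Fin K → ℝ → ℝ}
    (hφ : ∀ k, Differentiable ℝ (φ k)) (xt : Fin m → Fin (d + 1) → ℝ) (y : Fin m → ℝ)
    (θ : FFParams N d) (α : Fin K → ℝ) (k : Fin K) :
    gradient (sqLossK φ xt y) (kronParams θ α) (Sum.inr (Sum.inl k)) =
      ∑ j, (uK φ (kronParams θ α) (xt j) - y j) * uFF (φ k) θ (xt j) := by
  have hderiv := hasDerivAt_add_smul_single_gradient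
    (differentiable_sqLossK hφ xt y (kronParams θ α)) (Sum.inr (Sum.inl k))
  have hline : ∀ s : ℝ,
      sqLossK φ xt y (kronParams θ α + s • EuclideanSpace.single (Sum.inr (Sum.inl k)) 1) =
        (1 / 2 : ℝ) * ∑ j, (uK φ (kronParams θ α) (xt j) - y j + s * uFF (φ k) θ (xt j)) ^ 2 := by
    intro s
    simp only [kronParams_add_smul_single_alpha, sqLossK, uK_kronParams, Pi.add_apply,
      Pi.smul_apply, smul_eq_mul, add_mul, Finset.sum_add_distrib, Pi.single_apply, mul_ite,
      mul_one, mul_zero, ite_mul, zero_mul, Finset.sum_ite_eq', Finset.mem_univ, if_true]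
    exact congrArg _ (Finset.sum_congr rfl fun j _ => by ring)
  simp only [hline] at hderiv
  exact hderiv.unique (hasDerivAt_half_sum_sq_add_mul _ _)

theorem norm_sq_gradient_sqLossFF_lt_sqLossK (hK : 0 < K) {φ : Fin K → ℝ → ℝ}
    (hφ : ∀ k, Differentiable ℝ (φ k)) (xt : Fin m → Fin (d + 1) → ℝ) (y : Fin m → ℝ)
    (θ : FFParams N d) (hrank : (Matrix.of fun k j => uFF (φ k) θ (xt j)).rank = m)
    (hres : (fun j => uFF (φ ⟨0, hK⟩) θ (xt j) - y j) ≠ 0) :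
    ‖gradient (sqLossFF (φ ⟨0, hK⟩) xt y) θ‖ ^ 2 <
      ‖gradient (sqLossK φ xt y) (kronParams θ (initAlpha K))‖ ^ 2 := by
  set A : Matrix (Fin K) (Fin m) ℝ := Matrix.of fun k j => uFF (φ k) θ (xt j)
  set R : Fin m → ℝ := fun j => uFF (φ ⟨0, hK⟩) θ (xt j) - y j
  have hα : ∀ k, gradient (sqLossK φ xt y) (kronParams θ (initAlpha K)) (Sum.inr (Sum.inl k)) =
      A.mulVec R k := fun k => by
    simp only [gradient_sqLossK_kronParams_alpha hφ, uK_kronParams, sum_initAlpha_mul hK,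
      Matrix.mulVec, dotProduct, A, R, Matrix.of_apply, mul_comm]
  have hAR : 0 < ∑ k, A.mulVec R k ^ 2 := by
    obtain ⟨k, hk⟩ := Function.ne_iff.mp
      (Matrix.mulVec_ne_zero_of_rank_eq_card (by simpa using hrank) hres)
    exact Finset.sum_pos' (fun k _ => sq_nonneg _) ⟨k, Finset.mem_univ _, sq_pos_of_ne_zero hk⟩
  have hω : 0 ≤ ∑ k, gradient (sqLossK φ xt y) (kronParams θ (initAlpha K))
      (Sum.inr (Sum.inr k)) ^ 2 := by positivity
  simp only [EuclideanSpace.real_norm_sq_eq, Fintype.sum_sum_type,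
    gradient_sqLossK_kronParams_initAlpha_inl hK hφ, hα] at hω ⊢
  linarith

end Kronecker

theorem early_training_comparison_deterministic_general {N d K m : ℕ} (hK : 0 < K)
    (φ : Fin K → ℝ → ℝ) (hφ : ∀ k, ContDiff ℝ 1 (φ k))
    (c : Fin N → ℝ) (V : Fin N → Fin (d + 1) → ℝ)
    (xt : Fin m → Fin (d + 1) → ℝ) (y : Fin m → ℝ)
    (T₀ : ℝ) (hT₀ : 0 < T₀)
    (ΘFF : ℝ → FFParams N d) (ΘK : ℝ → KParams N d K)
    (hFFc : ∀ i, ΘFF 0 (Sum.inl i) = c i)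
    (hFFv : ∀ i j, ΘFF 0 (Sum.inr (i, j)) = V i j)
    (hKc : ∀ i, ΘK 0 (Sum.inl (Sum.inl i)) = c i)
    (hKv : ∀ i j, ΘK 0 (Sum.inl (Sum.inr (i, j))) = V i j)
    (hKα : ∀ k : Fin K, ΘK 0 (Sum.inr (Sum.inl k)) = if (k : ℕ) = 0 then 1 else 0)
    (hKω : ∀ k : Fin K, ΘK 0 (Sum.inr (Sum.inr k)) = 1)
    (hflowFF : ∀ t ∈ Set.Ico (0 : ℝ) T₀, HasDerivAt ΘFF
      (-(gradient (sqLossFF (φ ⟨0, hK⟩) xt y) (ΘFF t))) t)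
    (hflowK : ∀ t ∈ Set.Ico (0 : ℝ) T₀, HasDerivAt ΘK
      (-(gradient (sqLossK φ xt y) (ΘK t))) t)
    (hrank : Matrix.rank (Matrix.of fun (k : Fin K) (j : Fin m) =>
      ∑ i, c i * φ k (∑ l, V i l * xt j l)) = m)
    (hres : (fun j : Fin m => uFF (φ ⟨0, hK⟩) (ΘFF 0) (xt j) - y j) ≠ 0) :
    ∃ T : ℝ, 0 < T ∧ T ≤ T₀ ∧ ∀ t ∈ Set.Ioo (0 : ℝ) T,
      sqLossK φ xt y (ΘK t) < sqLossFF (φ ⟨0, hK⟩) xt y (ΘFF t) := by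
  have hφ' : ∀ k, Differentiable ℝ (φ k) := fun k => (hφ k).differentiable one_ne_zero
  have hΘK0 : ΘK 0 = kronParams (ΘFF 0) (initAlpha K) := by
    ext ((i | ⟨i, j⟩) | k | k) <;> simp [kronParams, initAlpha, hFFc, hFFv, hKc, hKv, hKα, hKω]
  have hA : (Matrix.of fun k j => uFF (φ k) (ΘFF 0) (xt j)) =
      Matrix.of fun k j => ∑ i, c i * φ k (∑ l, V i l * xt j l) := by
    ext k j
    simp [uFF, hFFc, hFFv]
  have hgap := norm_sq_gradient_sqLossFF_lt_sqLossK hK hφ' xt y (ΘFF 0) (hA ▸ hrank) hres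
  have h0 : (0 : ℝ) ∈ Set.Ico 0 T₀ := ⟨le_rfl, hT₀⟩
  have hdFF := hasDerivAt_comp_of_gradientFlow (differentiable_sqLossFF (hφ' _) xt y _)
    (hflowFF 0 h0)
  have hdK := hasDerivAt_comp_of_gradientFlow (differentiable_sqLossK hφ' xt y _) (hflowK 0 h0)
  rw [hΘK0] at hdK
  refine exists_forall_Ioo_of_eventually_nhdsGT hT₀
    (eventually_lt_of_hasDerivAt_lt ?_ hdK hdFF (neg_lt_neg hgap))
  rw [hΘK0, sqLossK_kronParams_initAlpha hK]

/-- deterministic core of the early-training comparison theorem.  Let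
`φ_1, …, φ_K ∈ C¹(ℝ)` with `K ≥ m`.  Start the FFN at `(c, V)` and the KNN at the same
`(c, V)` together with `α(0) = (1, 0, …, 0)`, `ω(0) = (1, …, 1)`, and let both parameter sets
solve the gradient flows of their square losses on `[0, T₀)`.  If the matrix
`A(0)_{kj} = Σ_i c_i φ_k(v_iᵀ x̃_j)` has full rank `m` and the initial residual is nonzero,
then there is `T ∈ (0, T₀]` with `L^K(t) < L^FF(t)` for all `t ∈ (0, T)`. -/
theorem early_training_comparison_deterministic {N d K m : ℕ} (hK : 0 < K) (hKm : m ≤ K)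
    (φ : Fin K → ℝ → ℝ) (hφ : ∀ k, ContDiff ℝ 1 (φ k))
    (c : Fin N → ℝ) (V : Fin N → Fin (d + 1) → ℝ)
    (xt : Fin m → Fin (d + 1) → ℝ) (y : Fin m → ℝ)
    (T₀ : ℝ) (hT₀ : 0 < T₀)
    (ΘFF : ℝ → FFParams N d) (ΘK : ℝ → KParams N d K)
    (hFFc : ∀ i, ΘFF 0 (Sum.inl i) = c i)
    (hFFv : ∀ i j, ΘFF 0 (Sum.inr (i, j)) = V i j)
    (hKc : ∀ i, ΘK 0 (Sum.inl (Sum.inl i)) = c i)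
    (hKv : ∀ i j, ΘK 0 (Sum.inl (Sum.inr (i, j))) = V i j)
    (hKα : ∀ k : Fin K, ΘK 0 (Sum.inr (Sum.inl k)) = if (k : ℕ) = 0 then 1 else 0)
    (hKω : ∀ k : Fin K, ΘK 0 (Sum.inr (Sum.inr k)) = 1)
    (hflowFF : ∀ t ∈ Set.Ico (0 : ℝ) T₀, HasDerivAt ΘFF
      (-(gradient (sqLossFF (φ ⟨0, hK⟩) xt y) (ΘFF t))) t)
    (hflowK : ∀ t ∈ Set.Ico (0 : ℝ) T₀, HasDerivAt ΘK
      (-(gradient (sqLossK φ xt y) (ΘK t))) t)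
    (hrank : Matrix.rank (Matrix.of fun (k : Fin K) (j : Fin m) =>
      ∑ i, c i * φ k (∑ l, V i l * xt j l)) = m)
    (hres : (fun j : Fin m => uFF (φ ⟨0, hK⟩) (ΘFF 0) (xt j) - y j) ≠ 0) :
    ∃ T : ℝ, 0 < T ∧ T ≤ T₀ ∧ ∀ t ∈ Set.Ioo (0 : ℝ) T,
      sqLossK φ xt y (ΘK t) < sqLossFF (φ ⟨0, hK⟩) xt y (ΘFF t) :=
  early_training_comparison_deterministic_general hK φ hφ c V xt y T₀ hT₀ ΘFF ΘK hFFc hFFv hKc hKv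
    hKα hKω hflowFF hflowK hrank hres
end
end

section
/- Almost-sure full rank of the feature matrix at initialization: assume each φ_k ∈ C¹(ℝ), m ≤ K, and for any m distinct reals z_1, …, z_m the K×m matrix [φ_k(z_j)] has full rank m. Let x̃_1, …, x̃_m ∈ ℝ^{d+1} be pairwise distinct. Let c_1, …, c_N be i.i.d. samples from a probability distribution on ℝ absolutely continuous with respect to Lebesgue measure, and let v_1, …, v_N be i.i.d. samples from the standard Gaussian N(0, I_{d+1}), with c and V independent. Then with probability 1, the K×m matrix Ψ with entries Ψ_{kj} = Σ_{i=1}^N c_i φ_k(v_iᵀ x̃_j) has full rank m. -/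
/-!
Split off the first hidden neuron: `Ψ = c₁ • A + B`, where `A = [φ_k(v₁ᵀ x̃_j)]` and `B` does not
depend on `c₁`. Almost surely `v₁` avoids the finitely many hyperplanes `vᵀ(x̃_j - x̃_{j'}) = 0`,
so the numbers `v₁ᵀ x̃_j` are distinct and `A` has full rank. Once `A` has full rank, `c • A + B`
fails to have full rank for only finitely many `c`: after rescaling by `c⁻¹`, the Gram determinant
of `A + t • B` is a polynomial in `t` that does not vanish at `t = 0`. A finite set is `μc`-null,
and Fubini assembles the slices.
-/

open MeasureTheory ProbabilityTheory Matrix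

namespace Matrix

variable {m n R : Type*} [Fintype m] [Fintype n] [DecidableEq n]

theorem det_ne_zero_of_rank_eq_card [Field R] {A : Matrix n n R}
    (h : A.rank = Fintype.card n) : A.det ≠ 0 := by
  have hsurj : Function.Surjective A.mulVecLin :=
    LinearMap.range_eq_top.mp (Submodule.eq_top_of_finrank_eq (by simpa [rank] using h))
  exact ((isUnit_iff_isUnit_det A).mp (mulVec_surjective_iff_isUnit.mp hsurj)).ne_zero

theorem rank_eq_card_iff_det_transpose_mul_self_ne_zero [Field R] [LinearOrder R]
    [IsStrictOrderedRing R] (A : Matrix m n R) :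
    A.rank = Fintype.card n ↔ (Aᵀ * A).det ≠ 0 := by
  rw [← rank_transpose_mul_self]
  exact ⟨det_ne_zero_of_rank_eq_card, rank_of_det_ne_zero⟩

theorem isOpen_setOf_rank_eq_card [Field R] [LinearOrder R] [IsStrictOrderedRing R]
    [TopologicalSpace R] [IsTopologicalRing R] [T1Space R] :
    IsOpen {A : Matrix m n R | A.rank = Fintype.card n} := by
  simp only [rank_eq_card_iff_det_transpose_mul_self_ne_zero]
  exact isOpen_ne_fun (continuous_id.matrix_transpose.matrix_mul continuous_id).matrix_det
    continuous_const

open Polynomial in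
theorem finite_setOf_rank_add_smul_ne_card [Field R] [LinearOrder R] [IsStrictOrderedRing R]
    {A : Matrix m n R} (hA : A.rank = Fintype.card n) (B : Matrix m n R) :
    {t : R | (A + t • B).rank ≠ Fintype.card n}.Finite := by
  let P : Matrix m n R[X] := A.map C + (X : R[X]) • B.map C
  have heval : ∀ t, (Pᵀ * P).det.eval t = ((A + t • B)ᵀ * (A + t • B)).det := by
    intro t
    rw [← coe_evalRingHom, RingHom.map_det]
    congr 1
    ext i j
    simp [P, Matrix.mul_apply, eval_finsetSum, mul_comm t]
  have hP : (Pᵀ * P).det ≠ 0 := fun h0 =>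
    (rank_eq_card_iff_det_transpose_mul_self_ne_zero A).mp hA (by simpa [h0] using (heval 0).symm)
  refine (finite_setOfPred_isRoot hP).subset fun t ht => ?_
  simpa [heval, rank_eq_card_iff_det_transpose_mul_self_ne_zero] using ht

theorem finite_setOf_rank_smul_add_ne_card [Field R] [LinearOrder R] [IsStrictOrderedRing R]
    {A : Matrix m n R} (hA : A.rank = Fintype.card n) (B : Matrix m n R) :
    {a : R | (a • A + B).rank ≠ Fintype.card n}.Finite := by
  refine (((finite_setOf_rank_add_smul_ne_card hA B).image Inv.inv).insert 0).subset
    fun a ha => ?_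
  by_contra hgood
  simp only [Set.mem_insert_iff, Set.mem_image, not_or, not_exists, not_and] at hgood
  have hscale : a • A + B = a • (A + a⁻¹ • B) := by
    rw [smul_add, smul_smul, mul_inv_cancel₀ hgood.1, one_smul]
  rw [Set.mem_ofPred_eq, hscale, rank_smul_of_mem_nonZeroDivisors _
    (mem_nonZeroDivisors_of_ne_zero hgood.1)] at ha
  exact hgood.2 a⁻¹ ha (inv_inv a)

end Matrix

theorem ae_pi_of_finite_slices {n : ℕ} {α : Fin (n + 1) → Type*} [∀ i, MeasurableSpace (α i)]
    {μ : ∀ i, Measure (α i)} [∀ i, SigmaFinite (μ i)] (i : Fin (n + 1))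
    [NullSingletonClass (μ i)] {s : Set (∀ j, α j)} (hs : MeasurableSet s)
    (h : ∀ x : ∀ j, α (i.succAbove j), {a | i.insertNth a x ∉ s}.Finite) :
    ∀ᵐ y ∂Measure.pi μ, y ∈ s := by
  set e := MeasurableEquiv.piFinSuccAbove α i
  have hslices : ∀ᵐ z ∂(μ i).prod (Measure.pi fun j => μ (i.succAbove j)), e.symm z ∈ s := by
    have hs' : MeasurableSet {z | e.symm z ∈ s} := e.symm.measurable hs
    rw [Measure.ae_prod_iff_ae_ae hs', Measure.ae_ae_comm hs']
    exact ae_of_all _ fun x => ae_iff.2 ((h x).measure_zero _)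
  exact ((measurePreserving_piFinSuccAbove μ i).quasiMeasurePreserving.ae hslices).mono
    fun y hy => by rwa [e.symm_apply_apply] at hy

theorem ae_dotProduct_ne_zero {n : ℕ} {μ : Fin (n + 1) → Measure ℝ} [∀ i, SigmaFinite (μ i)]
    [∀ i, NullSingletonClass (μ i)] {a : Fin (n + 1) → ℝ} (ha : a ≠ 0) :
    ∀ᵐ v ∂Measure.pi μ, v ⬝ᵥ a ≠ 0 := by
  obtain ⟨i, hi⟩ := Function.ne_iff.mp ha
  refine ae_pi_of_finite_slices (s := {v | v ⬝ᵥ a ≠ 0}) i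
    (measurableSet_eq_fun (by fun_prop) measurable_const).compl
    fun x => Set.Subsingleton.finite fun t ht t' ht' => ?_
  simp only [Set.mem_ofPred_eq, not_not, dotProduct, Fin.sum_univ_succAbove _ i,
    Fin.insertNth_apply_same, Fin.insertNth_apply_succAbove] at ht ht'
  exact mul_right_cancel₀ hi (by linarith)

theorem ae_injective_dotProduct {n : ℕ} {κ : Type*} [Finite κ] {μ : Fin (n + 1) → Measure ℝ}
    [∀ i, SigmaFinite (μ i)] [∀ i, NullSingletonClass (μ i)] {x : κ → Fin (n + 1) → ℝ}
    (hx : Function.Injective x) :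
    ∀ᵐ v ∂Measure.pi μ, Function.Injective fun j => v ⬝ᵥ x j := by
  have hpair : ∀ j j', ∀ᵐ v ∂Measure.pi μ, v ⬝ᵥ x j = v ⬝ᵥ x j' → j = j' := by
    intro j j'
    by_cases hjj : j = j'
    · exact ae_of_all _ fun _ _ => hjj
    · filter_upwards [ae_dotProduct_ne_zero (sub_ne_zero.mpr (hx.ne hjj))] with v hv heq
      exact absurd (by rw [dotProduct_sub, heq, sub_self]) hv
  exact (ae_all_iff.2 fun j => ae_all_iff.2 (hpair j)).mono fun v hv j j' => hv j j'

theorem feature_matrix_ae_full_rank_general {N d K m : ℕ} (hN : 0 < N)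
    (φ : Fin K → ℝ → ℝ) (hφ : ∀ k, ContDiff ℝ 1 (φ k))
    (hrank : ∀ z : Fin m → ℝ, Function.Injective z →
      Matrix.rank (Matrix.of fun (k : Fin K) (j : Fin m) => φ k (z j)) = m)
    (xt : Fin m → Fin (d + 1) → ℝ) (hxt : Function.Injective xt)
    (μc : Measure ℝ) [IsProbabilityMeasure μc] (hac : μc ≪ volume) :
    ∀ᵐ p ∂((Measure.pi fun _ : Fin N => μc).prod
        (Measure.pi fun _ : Fin N => Measure.pi fun _ : Fin (d + 1) => gaussianReal 0 1)),
      Matrix.rank (Matrix.of fun (k : Fin K) (j : Fin m) =>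
        ∑ i, p.1 i * φ k (∑ l, p.2 i l * xt j l)) = m := by
  obtain ⟨n, rfl⟩ : ∃ n, N = n + 1 := ⟨N - 1, by omega⟩
  have : NullSingletonClass μc := ⟨fun z => hac (measure_singleton z)⟩
  have : NullSingletonClass (gaussianReal 0 1) := nullSingletonClass_gaussianReal one_ne_zero
  let Ψ (c : Fin (n + 1) → ℝ) (V : Fin (n + 1) → Fin (d + 1) → ℝ) : Matrix (Fin K) (Fin m) ℝ :=
    of fun k j => ∑ i, c i * φ k (V i ⬝ᵥ xt j)
  have hΨ : Continuous fun p : _ × _ => Ψ p.1 p.2 := by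
    refine continuous_matrix fun k j => ?_
    have := (hφ k).continuous
    simp only [Ψ, of_apply, dotProduct]
    fun_prop
  have hgood : MeasurableSet {p : _ × _ | (Ψ p.1 p.2).rank = m} := by
    simpa using (isOpen_setOf_rank_eq_card.preimage hΨ).measurableSet
  refine (Measure.ae_prod_iff_ae_ae hgood).2 ((Measure.ae_ae_comm hgood).2 ?_)
  filter_upwards [(measurePreserving_eval _ 0).quasiMeasurePreserving.ae
    (ae_injective_dotProduct hxt)] with V hV
  let A₀ : Matrix (Fin K) (Fin m) ℝ := of fun k j => φ k (V 0 ⬝ᵥ xt j)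
  refine ae_pi_of_finite_slices (s := {c | (Ψ c V).rank = m}) 0
    (measurable_prodMk_right (y := V) hgood) fun c => ?_
  let B : Matrix (Fin K) (Fin m) ℝ := of fun k j => ∑ i, c i * φ k (V i.succ ⬝ᵥ xt j)
  have hslice : ∀ t, Ψ (Fin.insertNth 0 t c) V = t • A₀ + B := by
    intro t
    ext k j
    simp [Ψ, A₀, B, Fin.sum_univ_succ]
  refine (finite_setOf_rank_smul_add_ne_card (A := A₀)
    ((hrank _ hV).trans (Fintype.card_fin m).symm) B).subset fun t ht => ?_
  rwa [Set.mem_ofPred_eq, Fintype.card_fin, ← hslice]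

/-- almost-sure full rank of the feature matrix at initialization.
Assume each `φ_k ∈ C¹(ℝ)`, `m ≤ K`, and for any `m` distinct reals `z_1, …, z_m` the `K × m`
matrix `[φ_k(z_j)]` has full rank `m`.  Let the data points `x̃_j ∈ ℝ^{d+1}` be pairwise
distinct, let `c_1, …, c_N` be i.i.d. from a probability measure `μc ≪ Lebesgue`, and let
`v_1, …, v_N` be i.i.d. standard Gaussians `N(0, I_{d+1})`, independent of `c`.  Then with
probability 1 the `K × m` matrix `Ψ_{kj} = Σ_i c_i φ_k(v_iᵀ x̃_j)` has full rank `m`. -/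
theorem feature_matrix_ae_full_rank {N d K m : ℕ} (hN : 0 < N) (hmK : m ≤ K)
    (φ : Fin K → ℝ → ℝ) (hφ : ∀ k, ContDiff ℝ 1 (φ k))
    (hrank : ∀ z : Fin m → ℝ, Function.Injective z →
      Matrix.rank (Matrix.of fun (k : Fin K) (j : Fin m) => φ k (z j)) = m)
    (xt : Fin m → Fin (d + 1) → ℝ) (hxt : Function.Injective xt)
    (μc : Measure ℝ) [IsProbabilityMeasure μc] (hac : μc ≪ volume) :
    ∀ᵐ p ∂((Measure.pi fun _ : Fin N => μc).prod
        (Measure.pi fun _ : Fin N => Measure.pi fun _ : Fin (d + 1) => gaussianReal 0 1)),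
      Matrix.rank (Matrix.of fun (k : Fin K) (j : Fin m) =>
        ∑ i, p.1 i * φ k (∑ l, p.2 i l * xt j l)) = m :=
  feature_matrix_ae_full_rank_general hN φ hφ hrank xt hxt μc hac
end

section
/- Perturbation bound for the feature matrix: let φ_1, …, φ_K : ℝ → ℝ satisfy |φ_k(s)| ≤ B for all s ∈ ℝ and |φ_k(s) − φ_k(s')| ≤ B|s − s'| for all s, s' ∈ ℝ. Fix c ∈ ℝ^N and data points x̃_1, …, x̃_m ∈ ℝ^{d+1}. For parameters Θ = (α, V) with α ∈ ℝ^K and V = (v_1, …, v_N) ∈ ℝ^{(d+1)×N}, define the K×m matrix Ψ(Θ) by Ψ(Θ)_{kj} = Σ_{i=1}^N c_i α_k φ_k(v_iᵀ x̃_j). Then for any two parameter sets Θ = (α, V) and Θ̃ = (α̃, Ṽ): ‖Ψ(Θ) − Ψ(Θ̃)‖_F ≤ √(1 + (max_j ‖x̃_j‖ · ‖α‖_∞)²) · ‖c‖_1 · B · √(K m) · √(‖α − α̃‖² + ‖V − Ṽ‖_F²). -/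
open scoped BigOperators

noncomputable section

/-- Euclidean norm of a finitely-indexed real vector. -/
def euclNorm {ι : Type*} [Fintype ι] (u : ι → ℝ) : ℝ := Real.sqrt (∑ i, (u i) ^ 2)

/-- Frobenius norm of a real matrix. -/
def frobNorm {ι κ : Type*} [Fintype ι] [Fintype κ] (M : Matrix ι κ ℝ) : ℝ :=
  Real.sqrt (∑ i, ∑ j, (M i j) ^ 2)

/-- The feature matrix `Ψ(Θ)_{kj} = Σ_i c_i α_k φ_k(v_iᵀ x̃_j)` for parameters `Θ = (α, V)`. -/
def featMat {N d K m : ℕ} (φ : Fin K → ℝ → ℝ) (c : Fin N → ℝ)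
    (xt : Fin m → Fin (d + 1) → ℝ) (α : Fin K → ℝ) (V : Fin N → Fin (d + 1) → ℝ) :
    Matrix (Fin K) (Fin m) ℝ :=
  Matrix.of fun k j => ∑ i, c i * α k * φ k (∑ l, V i l * xt j l)

set_option maxHeartbeats 1000000 in
/-- perturbation bound for the feature matrix.  If each `φ_k` is bounded by `B`
and `B`-Lipschitz, then
`‖Ψ(Θ) − Ψ(Θ̃)‖_F ≤ √(1 + (max_j ‖x̃_j‖ ‖α‖_∞)²) ‖c‖₁ B √(Km) √(‖α − α̃‖² + ‖V − Ṽ‖_F²)`. -/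
theorem feature_matrix_perturbation {N d K m : ℕ} (B : ℝ) (φ : Fin K → ℝ → ℝ)
    (hbd : ∀ k (s : ℝ), |φ k s| ≤ B)
    (hlip : ∀ k (s s' : ℝ), |φ k s - φ k s'| ≤ B * |s - s'|)
    (c : Fin N → ℝ) (xt : Fin m → Fin (d + 1) → ℝ)
    (α α' : Fin K → ℝ) (V V' : Fin N → Fin (d + 1) → ℝ) :
    frobNorm (featMat φ c xt α V - featMat φ c xt α' V') ≤
      Real.sqrt (1 + ((⨆ j : Fin m, euclNorm (xt j)) * (⨆ k : Fin K, |α k|)) ^ 2) *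
        (∑ i, |c i|) * B * Real.sqrt ((K : ℝ) * m) *
          Real.sqrt (euclNorm (α - α') ^ 2 + ∑ i, ∑ l, (V i l - V' i l) ^ 2) := by
  rcases Nat.eq_zero_or_pos K with hK | hK
  · subst hK
    simp [frobNorm]
  rcases Nat.eq_zero_or_pos m with hm | hm
  · subst hm
    simp [frobNorm]
  have hB : 0 ≤ B := le_trans (abs_nonneg _) (hbd ⟨0, hK⟩ 0)
  set A := ⨆ k : Fin K, |α k| with hA_def
  set X := ⨆ j : Fin m, euclNorm (xt j) with hX_def
  have hA : ∀ k, |α k| ≤ A := fun k =>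
    le_ciSup (f := fun k : Fin K => |α k|) (Set.Finite.bddAbove (Set.finite_range _)) k
  have hX : ∀ j, euclNorm (xt j) ≤ X := fun j =>
    le_ciSup (f := fun j : Fin m => euclNorm (xt j)) (Set.Finite.bddAbove (Set.finite_range _)) j
  have hA0 : 0 ≤ A := le_trans (abs_nonneg _) (hA ⟨0, hK⟩)
  have hX0 : 0 ≤ X := le_trans (Real.sqrt_nonneg _) (hX ⟨0, hm⟩)
  set SV := ∑ i, ∑ l, (V i l - V' i l) ^ 2 with hSV_def
  have hSV0 : 0 ≤ SV := Finset.sum_nonneg fun i _ => Finset.sum_nonneg fun l _ => sq_nonneg _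
  set D := Real.sqrt SV with hD_def
  have hD0 : 0 ≤ D := Real.sqrt_nonneg _
  have hD2 : D ^ 2 = SV := Real.sq_sqrt hSV0
  set a := euclNorm (α - α') with ha_def
  have ha0 : 0 ≤ a := Real.sqrt_nonneg _
  have ha2 : a ^ 2 = ∑ k, (α k - α' k) ^ 2 := by
    rw [ha_def, euclNorm, Real.sq_sqrt (Finset.sum_nonneg fun k _ => sq_nonneg _)]
    simp [Pi.sub_apply]
  set C1 := ∑ i, |c i| with hC1_def
  have hC10 : 0 ≤ C1 := Finset.sum_nonneg fun i _ => abs_nonneg _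
  -- Cauchy-Schwarz: the inner products differ by at most D * X
  have hinner : ∀ (i : Fin N) (j : Fin m),
      |(∑ l, V i l * xt j l) - ∑ l, V' i l * xt j l| ≤ D * X := by
    intro i j
    have h1 : (∑ l, V i l * xt j l) - ∑ l, V' i l * xt j l
        = ∑ l, (V i l - V' i l) * xt j l := by
      rw [← Finset.sum_sub_distrib]; exact Finset.sum_congr rfl fun l _ => by ring
    rw [h1]
    have hcs := Finset.sum_mul_sq_le_sq_mul_sq Finset.univ
      (fun l => V i l - V' i l) (fun l => xt j l)
    have habs : |∑ l, (V i l - V' i l) * xt j l|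
        ≤ Real.sqrt (∑ l, (V i l - V' i l) ^ 2) * Real.sqrt (∑ l, (xt j l) ^ 2) := by
      rw [← Real.sqrt_sq_eq_abs, ← Real.sqrt_mul (Finset.sum_nonneg fun l _ => sq_nonneg _)]
      exact Real.sqrt_le_sqrt hcs
    refine habs.trans (mul_le_mul ?_ (hX j) (Real.sqrt_nonneg _) hD0)
    refine Real.sqrt_le_sqrt (Finset.single_le_sum
      (f := fun i => ∑ l, (V i l - V' i l) ^ 2)
      (fun i _ => Finset.sum_nonneg fun l _ => sq_nonneg _) (Finset.mem_univ i))
  -- entry bound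
  set M := featMat φ c xt α V - featMat φ c xt α' V' with hM_def
  have hentry : ∀ (k : Fin K) (j : Fin m),
      |M k j| ≤ C1 * B * (A * X * D + |α k - α' k|) := by
    intro k j
    have hMkj : M k j = ∑ i, (c i * α k * φ k (∑ l, V i l * xt j l)
        - c i * α' k * φ k (∑ l, V' i l * xt j l)) := by
      simp [hM_def, featMat, Matrix.sub_apply, Finset.sum_sub_distrib]
    rw [hMkj]
    calc |∑ i, (c i * α k * φ k (∑ l, V i l * xt j l)
          - c i * α' k * φ k (∑ l, V' i l * xt j l))|
        ≤ ∑ i, |c i * α k * φ k (∑ l, V i l * xt j l)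
          - c i * α' k * φ k (∑ l, V' i l * xt j l)| := Finset.abs_sum_le_sum_abs _ _
      _ ≤ ∑ i, |c i| * (B * (A * X * D + |α k - α' k|)) := by
          refine Finset.sum_le_sum fun i _ => ?_
          set s := ∑ l, V i l * xt j l
          set s' := ∑ l, V' i l * xt j l
          have key : c i * α k * φ k s - c i * α' k * φ k s'
              = c i * (α k * (φ k s - φ k s') + (α k - α' k) * φ k s') := by ring
          rw [key, abs_mul]
          refine mul_le_mul_of_nonneg_left ?_ (abs_nonneg _)
          calc |α k * (φ k s - φ k s') + (α k - α' k) * φ k s'|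
              ≤ |α k * (φ k s - φ k s')| + |(α k - α' k) * φ k s'| := abs_add_le _ _
            _ = |α k| * |φ k s - φ k s'| + |α k - α' k| * |φ k s'| := by
                rw [abs_mul, abs_mul]
            _ ≤ A * (B * (D * X)) + |α k - α' k| * B := by
                have t1 : |α k| * |φ k s - φ k s'| ≤ A * (B * (D * X)) :=
                  mul_le_mul (hA k)
                    ((hlip k s s').trans (mul_le_mul_of_nonneg_left (hinner i j) hB))
                    (abs_nonneg _) hA0
                have t2 : |α k - α' k| * |φ k s'| ≤ |α k - α' k| * B :=
                  mul_le_mul_of_nonneg_left (hbd k s') (abs_nonneg _)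
                exact add_le_add t1 t2
            _ = B * (A * X * D + |α k - α' k|) := by ring
      _ = C1 * B * (A * X * D + |α k - α' k|) := by
          rw [← Finset.sum_mul]; ring
  -- squared entry bound
  have hentry2 : ∀ (k : Fin K) (j : Fin m),
      (M k j) ^ 2 ≤ C1 ^ 2 * B ^ 2 * (1 + (X * A) ^ 2) * (SV + (α k - α' k) ^ 2) := by
    intro k j
    have h1 := hentry k j
    have h2 : (M k j) ^ 2 ≤ (C1 * B * (A * X * D + |α k - α' k|)) ^ 2 := by
      rw [← sq_abs (M k j)]
      exact pow_le_pow_left₀ (abs_nonneg _) h1 2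
    refine h2.trans ?_
    have he0 : 0 ≤ |α k - α' k| := abs_nonneg _
    have hsq : (A * X * D + |α k - α' k|) ^ 2
        ≤ (1 + (X * A) ^ 2) * (D ^ 2 + |α k - α' k| ^ 2) := by
      nlinarith [sq_nonneg (A * X * |α k - α' k| - D)]
    calc (C1 * B * (A * X * D + |α k - α' k|)) ^ 2
        = C1 ^ 2 * B ^ 2 * (A * X * D + |α k - α' k|) ^ 2 := by ring
      _ ≤ C1 ^ 2 * B ^ 2 * ((1 + (X * A) ^ 2) * (D ^ 2 + |α k - α' k| ^ 2)) := by
          refine mul_le_mul_of_nonneg_left hsq (by positivity)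
      _ = C1 ^ 2 * B ^ 2 * (1 + (X * A) ^ 2) * (SV + (α k - α' k) ^ 2) := by
          rw [hD2, sq_abs]; ring
  -- sum it all up
  set C := C1 ^ 2 * B ^ 2 * (1 + (X * A) ^ 2) with hC_def
  have hC0 : 0 ≤ C := by positivity
  have hsum : ∑ k, ∑ j, (M k j) ^ 2 ≤ (m : ℝ) * C * ((K : ℝ) * SV + a ^ 2) := by
    calc ∑ k, ∑ j, (M k j) ^ 2
        ≤ ∑ k : Fin K, ∑ _j : Fin m, C * (SV + (α k - α' k) ^ 2) :=
          Finset.sum_le_sum fun k _ => Finset.sum_le_sum fun j _ => hentry2 k j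
      _ = ∑ k : Fin K, (m : ℝ) * (C * (SV + (α k - α' k) ^ 2)) := by
          simp [Finset.sum_const, Fintype.card_fin, nsmul_eq_mul]
      _ = (m : ℝ) * C * ((K : ℝ) * SV + a ^ 2) := by
          rw [← Finset.mul_sum, ← Finset.mul_sum, Finset.sum_add_distrib,
            Finset.sum_const, Finset.card_univ, Fintype.card_fin, nsmul_eq_mul, ← ha2]
          ring
  set R := Real.sqrt (1 + (X * A) ^ 2) * C1 * B * Real.sqrt ((K : ℝ) * m)
      * Real.sqrt (a ^ 2 + SV) with hR_def
  have hR0 : 0 ≤ R := by positivity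
  have hR2 : R ^ 2 = (1 + (X * A) ^ 2) * C1 ^ 2 * B ^ 2 * ((K : ℝ) * m) * (a ^ 2 + SV) := by
    rw [hR_def]
    have h1 : (0:ℝ) ≤ 1 + (X * A) ^ 2 := by positivity
    have h2 : (0:ℝ) ≤ (K : ℝ) * m := by positivity
    have h3 : (0:ℝ) ≤ a ^ 2 + SV := by positivity
    rw [mul_pow, mul_pow, mul_pow, mul_pow, Real.sq_sqrt h1, Real.sq_sqrt h2, Real.sq_sqrt h3]
  have hfinal : ∑ k, ∑ j, (M k j) ^ 2 ≤ R ^ 2 := by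
    rw [hR2]
    have hK1 : (1 : ℝ) ≤ (K : ℝ) := by exact_mod_cast hK
    refine hsum.trans ?_
    have h : (K : ℝ) * SV + a ^ 2 ≤ (K : ℝ) * (a ^ 2 + SV) := by nlinarith [sq_nonneg a]
    calc (m : ℝ) * C * ((K : ℝ) * SV + a ^ 2)
        ≤ (m : ℝ) * C * ((K : ℝ) * (a ^ 2 + SV)) :=
          mul_le_mul_of_nonneg_left h (by positivity)
      _ = (1 + (X * A) ^ 2) * C1 ^ 2 * B ^ 2 * ((K : ℝ) * m) * (a ^ 2 + SV) := by
          rw [hC_def]; ring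
  calc frobNorm M = Real.sqrt (∑ k, ∑ j, (M k j) ^ 2) := rfl
    _ ≤ Real.sqrt (R ^ 2) := Real.sqrt_le_sqrt hfinal
    _ = R := Real.sqrt_sq hR0
end
end

section
/- Scalar perturbation estimate: let φ : ℝ → ℝ satisfy |φ(s)| ≤ B for all s and |φ(s) − φ(s')| ≤ B|s − s'| for all s, s'. Let c ∈ ℝ^N, x̃ ∈ ℝ^{d+1}, α, α̃ ∈ ℝ, and v_i, ṽ_i ∈ ℝ^{d+1} for i = 1, …, N. Then |Σ_{i=1}^N c_i (α φ(v_iᵀ x̃) − α̃ φ(ṽ_iᵀ x̃))| ≤ B √(‖c‖_1² + (‖x̃‖ · |α| · ‖c‖)²) · √(|α − α̃|² + Σ_{i=1}^N ‖v_i − ṽ_i‖²). -/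
open scoped BigOperators

noncomputable section

private lemma cs2 (a b x y : ℝ) :
    a * x + b * y ≤ Real.sqrt (a ^ 2 + b ^ 2) * Real.sqrt (x ^ 2 + y ^ 2) := by
  have h : (a * x + b * y) ^ 2 ≤ (a ^ 2 + b ^ 2) * (x ^ 2 + y ^ 2) := by
    nlinarith [sq_nonneg (a * y - b * x)]
  calc a * x + b * y ≤ |a * x + b * y| := le_abs_self _
    _ = Real.sqrt ((a * x + b * y) ^ 2) := (Real.sqrt_sq_eq_abs _).symm
    _ ≤ Real.sqrt ((a ^ 2 + b ^ 2) * (x ^ 2 + y ^ 2)) := Real.sqrt_le_sqrt h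
    _ = _ := Real.sqrt_mul (by positivity) _

private lemma csSum {ι : Type*} [Fintype ι] (f g : ι → ℝ) :
    ∑ i, f i * g i ≤ Real.sqrt (∑ i, (f i) ^ 2) * Real.sqrt (∑ i, (g i) ^ 2) :=
  Real.sum_mul_le_sqrt_mul_sqrt Finset.univ f g

private lemma abs_sum_le {ι : Type*} [Fintype ι] (u x : ι → ℝ) :
    |∑ j, u j * x j| ≤ Real.sqrt (∑ j, (u j) ^ 2) * Real.sqrt (∑ j, (x j) ^ 2) := by
  calc |∑ j, u j * x j| ≤ ∑ j, |u j * x j| := Finset.abs_sum_le_sum_abs _ _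
    _ = ∑ j, |u j| * |x j| := by simp [abs_mul]
    _ ≤ Real.sqrt (∑ j, |u j| ^ 2) * Real.sqrt (∑ j, |x j| ^ 2) := csSum _ _
    _ = _ := by simp [sq_abs]

/-- scalar perturbation estimate.  For a bounded, `B`-Lipschitz activation `φ`,
`|Σ_i c_i (α φ(v_iᵀ x̃) − α̃ φ(ṽ_iᵀ x̃))| ≤
  B √(‖c‖₁² + (‖x̃‖ |α| ‖c‖)²) · √(|α − α̃|² + Σ_i ‖v_i − ṽ_i‖²)`. -/
theorem scalar_perturbation_estimate {N d : ℕ} (B : ℝ) (φ : ℝ → ℝ)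
    (hbd : ∀ s : ℝ, |φ s| ≤ B)
    (hlip : ∀ s s' : ℝ, |φ s - φ s'| ≤ B * |s - s'|)
    (c : Fin N → ℝ) (xt : Fin (d + 1) → ℝ) (α α' : ℝ)
    (v v' : Fin N → Fin (d + 1) → ℝ) :
    |∑ i, c i * (α * φ (∑ j, v i j * xt j) - α' * φ (∑ j, v' i j * xt j))| ≤
      B * Real.sqrt ((∑ i, |c i|) ^ 2 + (euclNorm xt * |α| * euclNorm c) ^ 2) *
        Real.sqrt ((α - α') ^ 2 + ∑ i, ∑ j, (v i j - v' i j) ^ 2) := by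
  have hB : 0 ≤ B := le_trans (abs_nonneg _) (hbd 0)
  set X : ℝ := euclNorm xt with hX
  set S1 : ℝ := ∑ i, |c i| with hS1
  set S2 : ℝ := euclNorm c with hS2
  set r : Fin N → ℝ := fun i => Real.sqrt (∑ j, (v i j - v' i j) ^ 2) with hr
  set T : ℝ := Real.sqrt (∑ i, ∑ j, (v i j - v' i j) ^ 2) with hT
  -- per-term bound
  have hterm : ∀ i, |c i * (α * φ (∑ j, v i j * xt j) - α' * φ (∑ j, v' i j * xt j))|
      ≤ |c i| * (B * |α - α'|) + |c i| * (|α| * B * (r i * X)) := by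
    intro i
    set s := ∑ j, v i j * xt j
    set s' := ∑ j, v' i j * xt j
    have hss' : |s - s'| ≤ r i * X := by
      have : s - s' = ∑ j, (v i j - v' i j) * xt j := by
        simp [s, s', ← Finset.sum_sub_distrib, sub_mul]
      rw [this]
      simpa [hr, hX, euclNorm] using abs_sum_le (fun j => v i j - v' i j) xt
    have h1 : |α * φ s - α' * φ s'| ≤ B * |α - α'| + |α| * B * (r i * X) := by
      have hdec : α * φ s - α' * φ s' = (α - α') * φ s' + α * (φ s - φ s') := by ring
      rw [hdec]
      calc |(α - α') * φ s' + α * (φ s - φ s')|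
          ≤ |(α - α') * φ s'| + |α * (φ s - φ s')| := abs_add_le _ _
        _ = |α - α'| * |φ s'| + |α| * |φ s - φ s'| := by rw [abs_mul, abs_mul]
        _ ≤ |α - α'| * B + |α| * (B * |s - s'|) := by
            gcongr
            · exact hbd _
            · exact hlip _ _
        _ ≤ B * |α - α'| + |α| * (B * (r i * X)) := by
            have : B * |s - s'| ≤ B * (r i * X) := by gcongr
            nlinarith [abs_nonneg α]
        _ = B * |α - α'| + |α| * B * (r i * X) := by ring
    rw [abs_mul]
    calc |c i| * |α * φ s - α' * φ s'| ≤ |c i| * (B * |α - α'| + |α| * B * (r i * X)) := by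
          gcongr
      _ = |c i| * (B * |α - α'|) + |c i| * (|α| * B * (r i * X)) := by ring
  have hstep1 : |∑ i, c i * (α * φ (∑ j, v i j * xt j) - α' * φ (∑ j, v' i j * xt j))|
      ≤ B * |α - α'| * S1 + |α| * B * X * ∑ i, |c i| * r i := by
    calc |∑ i, c i * (α * φ (∑ j, v i j * xt j) - α' * φ (∑ j, v' i j * xt j))|
        ≤ ∑ i, |c i * (α * φ (∑ j, v i j * xt j) - α' * φ (∑ j, v' i j * xt j))| :=
          Finset.abs_sum_le_sum_abs _ _
      _ ≤ ∑ i, (|c i| * (B * |α - α'|) + |c i| * (|α| * B * (r i * X))) :=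
          Finset.sum_le_sum fun i _ => hterm i
      _ = B * |α - α'| * S1 + |α| * B * X * ∑ i, |c i| * r i := by
          have e1 : ∑ i, |c i| * (B * |α - α'|) = B * |α - α'| * S1 := by
            rw [← Finset.sum_mul, ← hS1]; ring
          have e2 : ∑ i, |c i| * (|α| * B * (r i * X))
              = |α| * B * X * ∑ i, |c i| * r i := by
            rw [Finset.mul_sum]
            exact Finset.sum_congr rfl fun i _ => by ring
          rw [Finset.sum_add_distrib, e1, e2]
  -- Cauchy-Schwarz on the i-sum
  have hstep2 : ∑ i, |c i| * r i ≤ S2 * T := by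
    have := csSum (fun i => |c i|) r
    have hrsq : ∀ i, (r i) ^ 2 = ∑ j, (v i j - v' i j) ^ 2 := fun i =>
      Real.sq_sqrt (by positivity)
    simpa [sq_abs, hrsq, hS2, hT, euclNorm] using this
  have hchain : |∑ i, c i * (α * φ (∑ j, v i j * xt j) - α' * φ (∑ j, v' i j * xt j))|
      ≤ B * (S1 * |α - α'| + (X * |α| * S2) * T) := by
    calc |∑ i, c i * (α * φ (∑ j, v i j * xt j) - α' * φ (∑ j, v' i j * xt j))|
        ≤ B * |α - α'| * S1 + |α| * B * X * ∑ i, |c i| * r i := hstep1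
      _ ≤ B * |α - α'| * S1 + |α| * B * X * (S2 * T) := by
          have hX0 : 0 ≤ X := Real.sqrt_nonneg _
          have : 0 ≤ |α| * B * X := by positivity
          gcongr
      _ = B * (S1 * |α - α'| + (X * |α| * S2) * T) := by ring
  refine hchain.trans ?_
  have h2 := cs2 S1 (X * |α| * S2) |α - α'| T
  have hT2 : T ^ 2 = ∑ i, ∑ j, (v i j - v' i j) ^ 2 :=
    Real.sq_sqrt (by positivity)
  have habs : |α - α'| ^ 2 = (α - α') ^ 2 := sq_abs _
  rw [habs, hT2] at h2
  calc B * (S1 * |α - α'| + (X * |α| * S2) * T)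
      ≤ B * (Real.sqrt (S1 ^ 2 + (X * |α| * S2) ^ 2) *
          Real.sqrt ((α - α') ^ 2 + ∑ i, ∑ j, (v i j - v' i j) ^ 2)) := by
        apply mul_le_mul_of_nonneg_left _ hB
        exact le_of_eq_of_le (by ring) h2
    _ = _ := by rw [← mul_assoc]
end
end
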